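/- arXiv:0811.2781 — 2 statements merged into one kernel-verified Lean document; each statement's English description precedes it below -/
import Mathlib

section
/- For k ≥ 1 and r ∈ ℕ, the dual theta polynomial ϑ̂_r(x;y) = ∑_i q_{r-i}(x) h_i(y) equals the theta polynomial Θ_{(1^r)}(x;y) indexed by the column partition (1,...,1) of length r; concretely, det(ϑ_{1+j−i}(x;y))_{1≤i,j≤r} = ϑ̂_r(x;y). -/
/-- `e_i(y)` for `i : ℕ`. -/
def esymmVal {R : Type*} [CommRing R] {k : ℕ} (y : Fin k → R) (i : ℕ) : R :=
  ∑ s ∈ Finset.powersetCard i (Finset.univ : Finset (Fin k)), ∏ j ∈ s, y j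

/-- `ϑ_r(x;y) = ∑_i q_{r-i}(x) e_i(y)` for `r : ℤ` (zero for negative `r`). -/
noncomputable def thInt {R : Type*} [CommRing R] {k : ℕ}
    (Q : PowerSeries R) (y : Fin k → R) (r : ℤ) : R :=
  if 0 ≤ r then
    ∑ i ∈ Finset.range (r.toNat + 1), PowerSeries.coeff (r.toNat - i) Q * esymmVal y i
  else 0

/-! With `A = Q · ∏ⱼ (1 + yⱼ t)` and `B = Q · H` one has `ϑ_m = [tᵐ] A`, `ϑ̂_m = [tᵐ] B`, and
`A(t) · B(-t) = 1` because `Q(t) · Q(-t) = 1`. Hence the upper triangular Toeplitz matrices built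
from the first `r + 1` coefficients of `A(t)` and `B(-t)` are mutually inverse, and the former has
determinant `1`. The corner entry `(-1)ʳ ϑ̂_r` of the inverse is then the corresponding cofactor,
which is `(-1)ʳ det (ϑ_{1+j-i})`. -/

namespace PowerSeries

variable {R : Type*} [CommRing R]

noncomputable def toeplitz (F : PowerSeries R) (n : ℕ) : Matrix (Fin n) (Fin n) R :=
  Matrix.of fun i j => if (i : ℕ) ≤ j then coeff ((j : ℕ) - i) F else 0

lemma coeff_sub_mul_eq_sum_Ico (F G : PowerSeries R) {a b : ℕ} (hab : a ≤ b) :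
    coeff (b - a) (F * G) = ∑ l ∈ Finset.Ico a (b + 1), coeff (l - a) F * coeff (b - l) G := by
  rw [Finset.sum_Ico_eq_sum_range, coeff_mul,
    Finset.Nat.sum_antidiagonal_eq_sum_range_succ (fun p q => coeff p F * coeff q G),
    show b + 1 - a = b - a + 1 by omega]
  refine Finset.sum_congr rfl fun m hm => ?_
  rw [Finset.mem_range] at hm
  rw [show a + m - a = m by omega, show b - (a + m) = b - a - m by omega]

lemma toeplitz_mul (F G : PowerSeries R) (n : ℕ) :
    toeplitz (F * G) n = toeplitz F n * toeplitz G n := by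
  ext i j
  simp only [toeplitz, Matrix.mul_apply, Matrix.of_apply, ite_zero_mul_ite_zero]
  rw [Fin.sum_univ_eq_sum_range (fun l => if (i : ℕ) ≤ l ∧ l ≤ j then
    coeff (l - i) F * coeff ((j : ℕ) - l) G else 0), ← Finset.sum_filter]
  split_ifs with hij
  · rw [coeff_sub_mul_eq_sum_Ico F G hij]
    congr 1
    ext l
    simp only [Finset.mem_Ico, Finset.mem_filter, Finset.mem_range]
    omega
  · refine (Finset.sum_eq_zero fun l hl => ?_).symm
    simp only [Finset.mem_filter] at hl
    omega

lemma toeplitz_one (n : ℕ) : toeplitz (1 : PowerSeries R) n = 1 := by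
  ext i j
  simp only [toeplitz, Matrix.of_apply, coeff_one, Matrix.one_apply, Fin.ext_iff]
  split_ifs <;> first | rfl | (exfalso; omega)

lemma det_toeplitz (F : PowerSeries R) (n : ℕ) :
    (toeplitz F n).det = constantCoeff F ^ n := by
  rw [Matrix.det_of_isUpperTriangular]
  · simp [toeplitz]
  · intro i j (hij : j < i)
    simp [toeplitz, not_le.2 hij]

lemma det_hessenberg_of_mul_eq_one {F G : PowerSeries R} (hFG : F * G = 1) (r : ℕ) :
    (-1) ^ r * (Matrix.of fun i j : Fin r =>
      if (i : ℕ) ≤ j + 1 then coeff ((j : ℕ) + 1 - i) F else 0).det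
      = constantCoeff F ^ (r + 1) * coeff r G := by
  set T := toeplitz F (r + 1)
  have hadj : T.adjugate = constantCoeff F ^ (r + 1) • toeplitz G (r + 1) := by
    calc T.adjugate = T.adjugate * (T * toeplitz G (r + 1)) := by
          rw [← toeplitz_mul, hFG, toeplitz_one, Matrix.mul_one]
      _ = constantCoeff F ^ (r + 1) • toeplitz G (r + 1) := by
          rw [← Matrix.mul_assoc, Matrix.adjugate_mul, det_toeplitz, Matrix.smul_mul,
            Matrix.one_mul]
  have hminor : T.submatrix (Fin.last r).succAbove (Fin.succAbove 0) = Matrix.of fun i j : Fin r =>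
      if (i : ℕ) ≤ j + 1 then coeff ((j : ℕ) + 1 - i) F else 0 := by
    ext i j
    simp only [T, toeplitz, Matrix.submatrix_apply, Matrix.of_apply, Fin.succAbove_last,
      Fin.succAbove_zero, Fin.val_castSucc, Fin.val_succ]
  have h := congrFun (congrFun hadj 0) (Fin.last r)
  rw [Matrix.adjugate_fin_succ_eq_det_submatrix, hminor] at h
  simpa [toeplitz] using h

lemma rescale_neg_one_one_add_C_mul_X (c : R) :
    rescale (-1) (1 + C c * X) = 1 - C c * X := by
  ext (_ | _ | n) <;> simp [coeff_rescale, coeff_one]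

lemma rescale_neg_one_one_sub_C_mul_X (c : R) :
    rescale (-1) (1 - C c * X) = 1 + C c * X := by
  ext (_ | _ | n) <;> simp [coeff_rescale, coeff_one]

lemma rescale_neg_one_rescale_neg_one (F : PowerSeries R) : rescale (-1) (rescale (-1) F) = F := by
  rw [rescale_rescale, neg_one_mul, neg_neg, rescale_one, RingHom.id_apply]

lemma mul_rescale_neg_one_self_eq_one {Q P : PowerSeries R} (hP : IsUnit P)
    (hQ : Q * P = rescale (-1) P) : Q * rescale (-1) Q = 1 := by
  have hQ' : rescale (-1) Q * rescale (-1) P = P := by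
    rw [← map_mul, hQ, rescale_neg_one_rescale_neg_one]
  refine (hP.mul (hP.map (rescale (-1)))).mul_left_cancel ?_
  calc P * rescale (-1) P * (Q * rescale (-1) Q)
      = (Q * P) * (rescale (-1) Q * rescale (-1) P) := by ring
    _ = P * rescale (-1) P * 1 := by rw [hQ, hQ']; ring

lemma coeff_mul_eq_sum_range (F G : PowerSeries R) (r : ℕ) :
    coeff r (F * G) = ∑ i ∈ Finset.range (r + 1), coeff (r - i) F * coeff i G := by
  rw [mul_comm, coeff_mul, Finset.Nat.sum_antidiagonal_eq_sum_range_succ_mk]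
  exact Finset.sum_congr rfl fun i _ => mul_comm _ _

end PowerSeries

open PowerSeries

lemma coeff_prod_one_add_C_mul_X {R : Type*} [CommRing R] {k : ℕ} (y : Fin k → R) (m : ℕ) :
    coeff m (∏ j, (1 + C (y j) * X)) = esymmVal y m := by
  simp_rw [add_comm (1 : PowerSeries R), Finset.prod_add, Finset.prod_const_one, mul_one, map_sum,
    Finset.prod_mul_distrib, Finset.prod_const, ← map_prod, coeff_C_mul_X_pow]
  rw [esymmVal, Finset.powersetCard_eq_filter, Finset.sum_filter]
  exact Finset.sum_congr rfl fun t _ => by split_ifs <;> simp_all [eq_comm]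

lemma thInt_one_add_sub {R : Type*} [CommRing R] {k : ℕ} (Q : PowerSeries R) (y : Fin k → R)
    (i j : ℕ) :
    thInt Q y (1 + j - i) =
      if i ≤ j + 1 then coeff (j + 1 - i) (Q * ∏ l, (1 + C (y l) * X)) else 0 := by
  unfold thInt
  split_ifs
  · rw [show (1 + j - i : ℤ).toNat = j + 1 - i by omega, coeff_mul_eq_sum_range]
    simp only [coeff_prod_one_add_C_mul_X]
  · omega
  · omega
  · rfl

theorem stmt_13_general {R : Type*} [CommRing R] (n k : ℕ)
    (x : Fin n → R) (y : Fin k → R) (Q H : PowerSeries R)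
    (hQ : Q * ∏ i : Fin n, (1 - PowerSeries.C (x i) * PowerSeries.X) =
          ∏ i : Fin n, (1 + PowerSeries.C (x i) * PowerSeries.X))
    (hH : H * ∏ j : Fin k, (1 - PowerSeries.C (y j) * PowerSeries.X) = 1)
    (r : ℕ) :
    Matrix.det (Matrix.of fun i j : Fin r => thInt Q y (1 + (j : ℕ) - (i : ℕ)))
      = ∑ i ∈ Finset.range (r + 1),
          PowerSeries.coeff (r - i) Q * PowerSeries.coeff i H := by
  set E := ∏ j, (1 + C (y j) * X)
  have hE : rescale (-1) E = ∏ j, (1 - C (y j) * X) := by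
    simp only [E, map_prod, rescale_neg_one_one_add_C_mul_X]
  have hQQ : Q * rescale (-1) Q = 1 := by
    refine mul_rescale_neg_one_self_eq_one (P := ∏ i, (1 - C (x i) * X)) ?_ ?_
    · simp [isUnit_iff_constantCoeff]
    · simp only [hQ, map_prod, rescale_neg_one_one_sub_C_mul_X]
  have hinv : (Q * E) * rescale (-1) (Q * H) = 1 := by
    calc (Q * E) * rescale (-1) (Q * H)
        = (Q * rescale (-1) Q) * rescale (-1) (rescale (-1) E * H) := by
          rw [map_mul, map_mul, rescale_neg_one_rescale_neg_one]; ring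
      _ = 1 := by rw [hQQ, hE, mul_comm _ H, hH, map_one, one_mul]
  have hc : constantCoeff (Q * E) = 1 := by
    simpa [E] using congrArg constantCoeff hQ
  refine (isUnit_neg_one.pow r).mul_left_cancel ?_
  simp only [thInt_one_add_sub]
  rw [det_hessenberg_of_mul_eq_one hinv, hc, one_pow, one_mul, coeff_rescale,
    coeff_mul_eq_sum_range]

/-- for `k ≥ 1` and `r ∈ ℕ`, the theta polynomial of the column `(1^r)`,
`Θ_{(1^r)} = det(ϑ_{1+j−i})_{1≤i,j≤r}`, equals the dual theta polynomial
`ϑ̂_r(x;y) = ∑_i q_{r-i}(x) h_i(y)`, where `h_i(y)` is the `i`-th coefficient of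
`H = ∏ⱼ (1 - yⱼ t)⁻¹`. -/
theorem stmt_13 {R : Type*} [CommRing R] (n k : ℕ) (hk : 1 ≤ k)
    (x : Fin n → R) (y : Fin k → R) (Q H : PowerSeries R)
    (hQ : Q * ∏ i : Fin n, (1 - PowerSeries.C (x i) * PowerSeries.X) =
          ∏ i : Fin n, (1 + PowerSeries.C (x i) * PowerSeries.X))
    (hH : H * ∏ j : Fin k, (1 - PowerSeries.C (y j) * PowerSeries.X) = 1)
    (r : ℕ) :
    Matrix.det (Matrix.of fun i j : Fin r => thInt Q y (1 + (j : ℕ) - (i : ℕ)))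
      = ∑ i ∈ Finset.range (r + 1),
          PowerSeries.coeff (r - i) Q * PowerSeries.coeff i H :=
  stmt_13_general n k x y Q H hQ hH r
end

section
/- Let λ be a k-strict partition with λ_i + λ_j ≤ 2k + j − i for all i < j. Then Θ_λ(x;y) = ∑_{μ⊆λ} S_μ(x) s_{λ'/μ'}(y), where S_μ(x) = det(q_{μ_i + j − i}(x)) and s_{λ'/μ'}(y) = det(e_{λ_i − μ_j + j − i}(y)). -/
/-- The index type of pairs `i < j` in `{0,…,ℓ-1}`. -/
def PairIdx (ℓ : ℕ) := {p : Fin ℓ × Fin ℓ // p.1 < p.2}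

instance (ℓ : ℕ) : Fintype (PairIdx ℓ) := by unfold PairIdx; infer_instance
instance (ℓ : ℕ) : DecidableEq (PairIdx ℓ) := by unfold PairIdx; infer_instance

/-- `e_r(y)` for `r : ℤ` (zero for negative `r`). -/
def eInt {R : Type*} [CommRing R] {k : ℕ} (y : Fin k → R) (r : ℤ) : R :=
  if 0 ≤ r then esymmVal y r.toNat else 0

/-- `q_r(x)` for `r : ℤ` (zero for negative `r`). -/
noncomputable def qInt {R : Type*} [CommRing R] (Q : PowerSeries R) (r : ℤ) : R :=
  if 0 ≤ r then PowerSeries.coeff r.toNat Q else 0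

/-!
A raising operator `R^v`, `v = ∑ n_{ij} (e_i - e_j)`, is modelled by the Laurent monomial
`X^v ∈ R[ℤ^m]`, acting on `ϑ_a` through the linear map `X^v ↦ ∏ ϑ_{a_i + v_i}`. Expanding
`∏_{i<j} (1 - X^{e_i - e_j})` over subsets of pairs gives the left-hand side, while
`1 - X^{e_i - e_j} = X^{-e_j} (X^{e_j} - X^{e_i})` makes the same product a Vandermonde
determinant, whence the left-hand side is `det (ϑ_{λ_i + j - i})`.

Since `ϑ_r = ∑_s e_{r-s} q_s`, the matrix `(ϑ_{λ_i + j - i})` is the product of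
`(e_{λ_i - i + s})_{i,s}` and `(q_{j - s})_{s,j}`, and Cauchy–Binet expands its determinant over
strictly increasing column choices `s_t = t - μ_t`. Unless `0 ≤ μ_t ≤ λ_t` for all `t`, one of
the two minors has a zero block too large for any permutation to avoid, so only `μ ⊆ λ` survive.
-/

open Finset Matrix Equiv

namespace Matrix

variable {R : Type*} [CommRing R] {m : ℕ} {ι : Type*} [Fintype ι] [LinearOrder ι]

open Classical in
theorem sum_injective_eq_sum_strictMono_sum_perm {M : Type*} [AddCommMonoid M]
    (G : (Fin m → ι) → M) :
    ∑ γ with Function.Injective γ, G γ =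
      ∑ f with StrictMono f, ∑ τ : Perm (Fin m), G (f ∘ τ) := by
  rw [← Finset.sum_product' (f := fun (f : Fin m → ι) (τ : Perm (Fin m)) => G (f ∘ τ))]
  symm
  refine Finset.sum_nbij' (fun p => p.1 ∘ p.2) (fun γ => (γ ∘ Tuple.sort γ, (Tuple.sort γ)⁻¹))
    ?_ ?_ ?_ ?_ fun _ _ => rfl
  · rintro ⟨f, τ⟩ h
    simp only [mem_product, mem_filter, mem_univ, true_and] at h ⊢
    exact h.1.injective.comp τ.injective
  · intro γ h
    simp only [mem_product, mem_filter, mem_univ, true_and, and_true] at h ⊢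
    exact (Tuple.monotone_sort γ).strictMono_of_injective (h.comp (Tuple.sort γ).injective)
  · rintro ⟨f, τ⟩ h
    simp only [mem_product, mem_filter, mem_univ, true_and, and_true] at h
    have hsorted : (f ∘ τ) ∘ Tuple.sort (f ∘ τ) = f := by
      have hf : (f ∘ τ) ∘ ⇑τ⁻¹ = f := by ext; simp
      rw [Tuple.unique_monotone (Tuple.monotone_sort _) (hf ▸ h.monotone), hf]
    have hperm : τ * Tuple.sort (f ∘ τ) = 1 :=
      DFunLike.coe_injective (h.injective.comp_left hsorted)
    exact Prod.ext hsorted (inv_eq_of_mul_eq_one_left hperm)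
  · intro γ _
    ext
    simp

open Classical in
theorem det_mul_eq_sum_strictMono (A : Matrix (Fin m) ι R) (B : Matrix ι (Fin m) R) :
    (A * B).det = ∑ f with StrictMono f, (A.submatrix id f).det * (B.submatrix f id).det := by
  calc (A * B).det = ∑ γ : Fin m → ι, (A.submatrix id γ).det * ∏ i, B (γ i) i := by
        simp only [det_apply', mul_apply, prod_univ_sum, mul_sum, sum_mul, Fintype.piFinset_univ,
          submatrix_apply, id, mul_assoc, ← prod_mul_distrib]
        exact sum_comm
    _ = ∑ γ with Function.Injective γ, (A.submatrix id γ).det * ∏ i, B (γ i) i := by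
        refine (sum_filter_of_ne fun γ _ hγ i j hij => ?_).symm
        by_contra hne
        exact hγ (by rw [det_zero_of_column_eq hne fun k => by simp [hij], zero_mul])
    _ = ∑ f with StrictMono f, ∑ τ : Perm (Fin m),
          (A.submatrix id (f ∘ τ)).det * ∏ i, B (f (τ i)) i :=
        sum_injective_eq_sum_strictMono_sum_perm _
    _ = _ := by
        refine sum_congr rfl fun f _ => ?_
        rw [det_apply' (B.submatrix f id), mul_sum]
        refine sum_congr rfl fun τ _ => ?_
        rw [show A.submatrix id (f ∘ τ) = (A.submatrix id f).submatrix id τ from rfl, det_permute']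
        simp only [submatrix_apply, id]
        ring

theorem det_eq_zero_of_forall_le_of_le {M : Matrix (Fin m) (Fin m) R} (k : Fin m)
    (h : ∀ i j, k ≤ i → j ≤ k → M i j = 0) : M.det = 0 := by
  rw [det_apply']
  refine sum_eq_zero fun σ _ => ?_
  obtain ⟨x, hxk, hkσ⟩ : ∃ x ≤ k, k ≤ σ x := by
    by_contra! hσ
    have := card_le_card_of_injOn σ (s := Iic k) (t := Iio k)
      (fun x hx => mem_Iio.2 (hσ x (mem_Iic.1 hx))) σ.injective.injOn
    simp at this
  exact mul_eq_zero_of_right _ (prod_eq_zero (mem_univ x) (h _ _ hkσ hxk))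

end Matrix

theorem StrictMono.monotone_sub_val {m : ℕ} {g : Fin m → ℤ} (hg : StrictMono g) :
    Monotone fun i : Fin m => g i - i := by
  cases m with
  | zero => exact fun i => i.elim0
  | succ n =>
    refine Fin.monotone_iff_le_succ.2 fun i => ?_
    have := hg i.castSucc_lt_succ
    simp only [Fin.val_castSucc, Fin.val_succ]
    omega

namespace RaisingOperator

variable {R : Type*} [CommRing R] {m : ℕ}

theorem prod_pairIdx {M : Type*} [CommMonoid M] (F : Fin m → Fin m → M) :
    ∏ p : PairIdx m, F p.1.1 p.1.2 = ∏ i, ∏ j, if i < j then F i j else 1 := by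
  refine (prod_subtype {p : Fin m × Fin m | p.1 < p.2} (by simp) fun p => F p.1 p.2).symm.trans ?_
  rw [prod_filter, Fintype.prod_prod_type]

variable (R) in
noncomputable def laurentMonomial (v : Fin m → ℤ) : AddMonoidAlgebra R (Fin m → ℤ) :=
  AddMonoidAlgebra.of R _ (Multiplicative.ofAdd v)

local notation "X" => laurentMonomial R

theorem laurentMonomial_zero : X (0 : Fin m → ℤ) = 1 :=
  map_one (AddMonoidAlgebra.of R _)

theorem laurentMonomial_add (v w : Fin m → ℤ) : X (v + w) = X v * X w := by
  simp [laurentMonomial]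

theorem laurentMonomial_sum {ι : Type*} (s : Finset ι) (v : ι → Fin m → ℤ) :
    X (∑ p ∈ s, v p) = ∏ p ∈ s, X (v p) := by
  simp [laurentMonomial, ofAdd_sum]

theorem laurentMonomial_nsmul (n : ℕ) (v : Fin m → ℤ) : X (n • v) = X v ^ n := by
  simp [laurentMonomial]

noncomputable def raisingAction (f : ℤ → R) (a : Fin m → ℤ) :
    AddMonoidAlgebra R (Fin m → ℤ) →ₗ[R] R :=
  (AddMonoidAlgebra.basis (Fin m → ℤ) R).constr R fun v => ∏ i, f (a i + v i)

theorem raisingAction_laurentMonomial (f : ℤ → R) (a v : Fin m → ℤ) :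
    raisingAction f a (X v) = ∏ i, f (a i + v i) :=
  (AddMonoidAlgebra.basis (Fin m → ℤ) R).constr_basis R _ v

theorem raisingAction_det (f : ℤ → R) (a : Fin m → ℤ) (c : Fin m → Fin m → ℤ) :
    raisingAction f a (det (of fun i j => X (Pi.single i (c i j)))) =
      det (of fun i j => f (a i + c i j)) := by
  simp only [det_apply', map_sum, of_apply, ← zsmul_eq_mul, map_zsmul, ← laurentMonomial_sum,
    raisingAction_laurentMonomial]
  refine sum_congr rfl fun σ _ => ?_
  have hsum : ∑ i, Pi.single (σ i) (c (σ i) i) = fun t => c t (σ.symm t) := by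
    rw [← univ_sum_single (fun t => c t (σ.symm t))]
    simpa using Equiv.sum_comp σ fun t => Pi.single t (c t (σ.symm t))
  rw [hsum, ← Equiv.prod_comp σ]
  simp

theorem prod_one_sub_laurentMonomial {ι : Type*} [DecidableEq ι] (s : Finset ι)
    (w : ι → Fin m → ℤ) :
    ∏ p ∈ s, (1 - X (w p)) = ∑ T ∈ s.powerset, (-1 : R) ^ #T • X (∑ p ∈ T, w p) := by
  simp only [prod_sub, prod_const_one, mul_one, laurentMonomial_sum]
  refine sum_congr rfl fun T _ => ?_
  rw [Algebra.smul_def, map_pow, map_neg, map_one]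

theorem sum_single_sub_single_apply (T : Finset (PairIdx m)) (t : Fin m) :
    (∑ p ∈ T, (Pi.single p.1.1 1 - Pi.single p.1.2 1 : Fin m → ℤ)) t =
      #{p ∈ T | p.1.1 = t} - #{p ∈ T | p.1.2 = t} := by
  simp [Finset.sum_apply, Pi.single_apply, sum_boole, eq_comm]

theorem prod_one_sub_laurentMonomial_eq_det :
    ∏ p : PairIdx m, (1 - X (Pi.single p.1.1 1 - Pi.single p.1.2 1)) =
      det (of fun i j : Fin m => X (Pi.single i ((j : ℤ) - i))) := by
  set e : Fin m → AddMonoidAlgebra R (Fin m → ℤ) := fun i => X (Pi.single i 1)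
  have hfactor : ∀ p : PairIdx m, 1 - X (Pi.single p.1.1 1 - Pi.single p.1.2 1) =
      X (-Pi.single p.1.2 1) * (e p.1.2 - e p.1.1) := by
    intro p
    simp only [e, mul_sub, ← laurentMonomial_add, neg_add_cancel, laurentMonomial_zero]
    rw [neg_add_eq_sub]
  have hentry : ∀ i j : Fin m, X (Pi.single i ((j : ℤ) - i)) =
      X (Pi.single i (-(i : ℤ))) * vandermonde e i j := by
    intro i j
    rw [vandermonde_apply, ← laurentMonomial_nsmul, ← laurentMonomial_add]
    congr 1
    ext t
    by_cases h : t = i <;> simp [h, sub_eq_neg_add]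
  have hdiag :
      ∏ p : PairIdx m, X (-Pi.single p.1.2 1) = ∏ j : Fin m, X (Pi.single j (-(j : ℤ))) := by
    rw [prod_pairIdx (fun _ j => X (-Pi.single j 1)), prod_comm]
    refine prod_congr rfl fun j _ => ?_
    rw [← prod_filter, filter_gt_eq_Iio, prod_const, Fin.card_Iio, ← laurentMonomial_nsmul]
    congr 1
    ext t
    by_cases h : t = j <;> simp [h]
  simp_rw [hentry, prod_congr rfl fun p _ => hfactor p, prod_mul_distrib, hdiag]
  rw [det_mul_column, det_vandermonde, prod_pairIdx (fun i j => e j - e i)]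
  simp_rw [← prod_filter, filter_lt_eq_Ioi]

theorem sum_powerset_pairIdx_eq_det (f : ℤ → R) (a : Fin m → ℤ) :
    ∑ T ∈ (univ : Finset (PairIdx m)).powerset, (-1 : R) ^ #T *
        ∏ i, f (a i + #{p ∈ T | p.1.1 = i} - #{p ∈ T | p.1.2 = i}) =
      det (of fun i j : Fin m => f (a i + j - i)) := by
  have h := congrArg (raisingAction f a)
    ((prod_one_sub_laurentMonomial univ _).symm.trans
      (prod_one_sub_laurentMonomial_eq_det (R := R)))
  simp only [map_sum, map_smul, raisingAction_laurentMonomial, raisingAction_det, smul_eq_mul,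
    sum_single_sub_single_apply] at h
  simpa only [add_sub_assoc] using h

end RaisingOperator

section Theta

variable {R : Type*} [CommRing R] {k : ℕ}

theorem qInt_of_neg (Q : PowerSeries R) {r : ℤ} (hr : r < 0) : qInt Q r = 0 :=
  if_neg hr.not_ge

theorem eInt_of_neg (y : Fin k → R) {r : ℤ} (hr : r < 0) : eInt y r = 0 :=
  if_neg hr.not_ge

theorem thInt_eq_sum (Q : PowerSeries R) (y : Fin k → R) {S : Finset ℤ} {u v : ℤ}
    (hS : Icc (-u) v ⊆ S) :
    thInt Q y (u + v) = ∑ s ∈ S, eInt y (u + s) * qInt Q (v - s) := by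
  rw [← sum_subset hS fun s _ hs => ?_]
  · by_cases huv : 0 ≤ u + v
    · rw [thInt, if_pos huv]
      refine sum_nbij' (fun i => i - u) (fun s => (u + s).toNat) ?_ ?_ ?_ ?_ ?_ <;>
        intro i hi <;> simp only [mem_range, mem_Icc] at hi ⊢
      · omega
      · omega
      · omega
      · omega
      · rw [eInt, qInt, if_pos (by omega), if_pos (by omega), mul_comm,
          show (u + (i - u)).toNat = i by omega,
          show (v - (i - u)).toNat = (u + v).toNat - i by omega]
    · rw [thInt, if_neg huv, sum_eq_zero fun s hs => ?_]
      rw [mem_Icc] at hs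
      omega
  · rw [mem_Icc, not_and_or, not_le, not_le] at hs
    rcases hs with hs | hs
    · rw [eInt_of_neg y (by omega), zero_mul]
    · rw [qInt_of_neg Q (by omega), mul_zero]

theorem det_qInt_eq_zero (Q : PowerSeries R) {m : ℕ} {g : Fin m → ℤ}
    (hg : Monotone fun i : Fin m => g i - i) {r : Fin m} (hr : (r : ℤ) < g r) :
    det (of fun i j : Fin m => qInt Q (j - g i)) = 0 :=
  det_eq_zero_of_forall_le_of_le r fun i j hi hj => by
    have := hg hi
    have : (j : ℕ) ≤ r := hj
    exact qInt_of_neg Q (by simp only at *; omega)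

theorem det_eInt_eq_zero (y : Fin k → R) {m : ℕ} {lam : Fin m → ℕ} (hlam : Antitone lam)
    {g : Fin m → ℤ} (hg : Monotone g) {r : Fin m} (hr : (lam r : ℤ) < r - g r) :
    det (of fun i j : Fin m => eInt y (lam i - i + g j)) = 0 :=
  det_eq_zero_of_forall_le_of_le r fun i j hi hj => by
    have := hg hj
    have : (lam i : ℤ) ≤ lam r := by exact_mod_cast hlam hi
    have : (r : ℕ) ≤ i := hi
    exact eInt_of_neg y (by omega)

noncomputable def eFactor (y : Fin k → R) {m : ℕ} (lam : Fin m → ℕ) (S : Finset ℤ) :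
    Matrix (Fin m) S R :=
  of fun i s => eInt y (lam i - i + s)

noncomputable def qFactor (Q : PowerSeries R) (m : ℕ) (S : Finset ℤ) : Matrix S (Fin m) R :=
  of fun s j => qInt Q (j - s)

theorem thInt_matrix_eq_eFactor_mul_qFactor (Q : PowerSeries R) (y : Fin k → R) {m : ℕ}
    (lam : Fin m → ℕ) {S : Finset ℤ} (hS : ∀ i : Fin m, Icc ((i : ℤ) - lam i) m ⊆ S) :
    of (fun i j : Fin m => thInt Q y ((lam i : ℤ) + (j : ℕ) - (i : ℕ))) =
      eFactor y lam S * qFactor Q m S := by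
  ext i j
  rw [of_apply, mul_apply]
  change _ = ∑ s : S, eInt y (lam i - i + (s : ℤ)) * qInt Q (j - (s : ℤ))
  rw [sum_coe_sort S fun s => eInt y (lam i - i + s) * qInt Q (j - s),
    ← thInt_eq_sum Q y ((Icc_subset_Icc (by omega) (by omega)).trans (hS i))]
  ring_nf

theorem mem_Icc_of_minors_ne_zero (Q : PowerSeries R) (y : Fin k → R) {m : ℕ}
    {lam : Fin m → ℕ} (hlam : Antitone lam) {S : Finset ℤ} {f : Fin m → S} (hf : StrictMono f)
    (hne : ((eFactor y lam S).submatrix id f).det * ((qFactor Q m S).submatrix f id).det ≠ 0)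
    (t : Fin m) : (t : ℤ) - f t ∈ Set.Icc 0 (lam t : ℤ) := by
  have hg : StrictMono fun i => (f i : ℤ) := (Subtype.strictMono_coe _).comp hf
  constructor
  · by_contra! ht
    exact hne (by rw [show (qFactor Q m S).submatrix f id = of fun i j : Fin m => qInt Q (j - f i)
      from rfl, det_qInt_eq_zero Q hg.monotone_sub_val (r := t) (by omega), mul_zero])
  · by_contra! ht
    exact hne (by rw [show (eFactor y lam S).submatrix id f = of fun i j : Fin m =>
      eInt y (lam i - i + f j) from rfl, det_eInt_eq_zero y hlam hg.monotone (r := t) (by omega),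
      zero_mul])

theorem det_thInt_eq_sum (Q : PowerSeries R) (y : Fin k → R) {m : ℕ} (lam : Fin m → ℕ)
    (hlam : Antitone lam) :
    det (of fun i j : Fin m => thInt Q y ((lam i : ℤ) + (j : ℕ) - (i : ℕ))) =
      ∑ μ ∈ (Icc (0 : Fin m → ℕ) lam).filter (fun μ => ∀ i j : Fin m, i ≤ j → μ j ≤ μ i),
        det (of fun i j : Fin m => qInt Q ((μ i : ℤ) + (j : ℕ) - (i : ℕ))) *
          det (of fun i j : Fin m => eInt y ((lam i : ℤ) - (μ j : ℤ) + (j : ℕ) - (i : ℕ))) := by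
  classical
  set S : Finset ℤ := Icc (-((univ.sup lam : ℕ) : ℤ)) m
  have hS : ∀ i : Fin m, Icc ((i : ℤ) - lam i) m ⊆ S := fun i =>
    Icc_subset_Icc_left (by have : lam i ≤ univ.sup lam := le_sup (mem_univ i); omega)
  rw [thInt_matrix_eq_eFactor_mul_qFactor Q y lam hS, det_mul_eq_sum_strictMono]
  symm
  let col (μ : Fin m → ℕ) (hμ : μ ≤ lam) (t : Fin m) : S :=
    ⟨t - μ t, hS t (mem_Icc.2 ⟨by have : μ t ≤ lam t := hμ t; omega, by omega⟩)⟩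
  have hval : ∀ μ (hμ : μ ≤ lam),
      det (of fun i j : Fin m => qInt Q ((μ i : ℤ) + (j : ℕ) - (i : ℕ))) *
          det (of fun i j : Fin m => eInt y ((lam i : ℤ) - (μ j : ℤ) + (j : ℕ) - (i : ℕ))) =
        ((eFactor y lam S).submatrix id (col μ hμ)).det *
          ((qFactor Q m S).submatrix (col μ hμ) id).det := by
    intro μ hμ
    rw [mul_comm]
    congr 2 <;> ext i j <;> simp only [eFactor, qFactor, col, submatrix_apply, of_apply, id] <;>
      ring_nf
  refine sum_bij_ne_zero (fun μ hμ _ => col μ (mem_Icc.1 (mem_filter.1 hμ).1).2) ?_ ?_ ?_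
    fun μ hμ _ => hval μ (mem_Icc.1 (mem_filter.1 hμ).1).2
  · intro μ hμ _
    refine mem_filter.2 ⟨mem_univ _, fun i j hij => ?_⟩
    have : μ j ≤ μ i := (mem_filter.1 hμ).2 i j hij.le
    change (i : ℤ) - μ i < (j : ℤ) - μ j
    omega
  · intro μ₁ _ _ μ₂ _ _ h
    funext t
    have := congrArg (fun f : Fin m → S => (f t : ℤ)) h
    simp only [col] at this
    omega
  · intro f hf hne
    have hbounds := mem_Icc_of_minors_ne_zero Q y hlam (mem_filter.1 hf).2 hne
    let μ : Fin m → ℕ := fun t => ((t : ℤ) - f t).toNat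
    have hμlam : μ ≤ lam := fun t => by have := hbounds t; simp only [Set.mem_Icc, μ] at *; omega
    have hcol : col μ hμlam = f := by
      funext t
      apply Subtype.ext
      have := hbounds t
      simp only [Set.mem_Icc, col, μ] at *
      omega
    refine ⟨μ, mem_filter.2 ⟨mem_Icc.2 ⟨fun t => Nat.zero_le _, hμlam⟩, fun i j hij => ?_⟩,
      by rwa [hval μ hμlam, hcol], hcol⟩
    have := (Subtype.strictMono_coe _).comp (mem_filter.1 hf).2 |>.monotone_sub_val hij
    simp only [Function.comp_apply, μ] at this ⊢
    omega

end Theta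

theorem stmt_16_general {R : Type*} [CommRing R] (k ℓ : ℕ) (y : Fin k → R)
    (Q : PowerSeries R)
    (lam : Fin ℓ → ℕ)
    (hanti : ∀ i j : Fin ℓ, i ≤ j → lam j ≤ lam i) :
    ∑ T ∈ (Finset.univ : Finset (PairIdx ℓ)).powerset,
      (-1 : R) ^ T.card *
        ∏ i : Fin ℓ,
          thInt Q y ((lam i : ℤ) + ((T.filter fun p => p.1.1 = i).card : ℤ)
            - ((T.filter fun p => p.1.2 = i).card : ℤ))
      = ∑ μ ∈ (Finset.Icc (0 : Fin ℓ → ℕ) lam).filter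
          (fun μ => ∀ i j : Fin ℓ, i ≤ j → μ j ≤ μ i),
          Matrix.det (Matrix.of fun i j : Fin ℓ =>
              qInt Q ((μ i : ℤ) + (j : ℕ) - (i : ℕ))) *
            Matrix.det (Matrix.of fun i j : Fin ℓ =>
              eInt y ((lam i : ℤ) - (μ j : ℤ) + (j : ℕ) - (i : ℕ))) :=
  (RaisingOperator.sum_powerset_pairIdx_eq_det (thInt Q y) fun i => (lam i : ℤ)).trans
    (det_thInt_eq_sum Q y lam hanti)

/-- if the `k`-strict partition `λ` satisfies `λ_i + λ_j ≤ 2k + j − i` for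
all `i < j` (so that `C(λ) = ∅` and `Θ_λ = ∏_{i<j}(1−R_{ij}) ϑ_λ`, expanded here as the
signed sum over subsets `T` of the pairs), then
`Θ_λ(x;y) = ∑_{μ⊆λ} S_μ(x) s_{λ'/μ'}(y)` with `S_μ(x) = det(q_{μ_i+j−i}(x))` and
`s_{λ'/μ'}(y) = det(e_{λ_i−μ_j+j−i}(y))`. -/
theorem stmt_16 {R : Type*} [CommRing R] (n k ℓ : ℕ) (x : Fin n → R) (y : Fin k → R)
    (Q : PowerSeries R)
    (hQ : Q * ∏ i : Fin n, (1 - PowerSeries.C (x i) * PowerSeries.X) =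
          ∏ i : Fin n, (1 + PowerSeries.C (x i) * PowerSeries.X))
    (lam : Fin ℓ → ℕ)
    (hanti : ∀ i j : Fin ℓ, i ≤ j → lam j ≤ lam i)
    (hkstrict : ∀ i j : Fin ℓ, i < j → k < lam j → lam j < lam i)
    (hC : ∀ i j : Fin ℓ, i < j → lam i + lam j + (i : ℕ) ≤ 2 * k + (j : ℕ)) :
    ∑ T ∈ (Finset.univ : Finset (PairIdx ℓ)).powerset,
      (-1 : R) ^ T.card *
        ∏ i : Fin ℓ,
          thInt Q y ((lam i : ℤ) + ((T.filter fun p => p.1.1 = i).card : ℤ)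
            - ((T.filter fun p => p.1.2 = i).card : ℤ))
      = ∑ μ ∈ (Finset.Icc (0 : Fin ℓ → ℕ) lam).filter
          (fun μ => ∀ i j : Fin ℓ, i ≤ j → μ j ≤ μ i),
          Matrix.det (Matrix.of fun i j : Fin ℓ =>
              qInt Q ((μ i : ℤ) + (j : ℕ) - (i : ℕ))) *
            Matrix.det (Matrix.of fun i j : Fin ℓ =>
              eInt y ((lam i : ℤ) - (μ j : ℤ) + (j : ℕ) - (i : ℕ))) :=
  stmt_16_general k ℓ y Q lam hanti
end
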